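/- arXiv:1307.1277 — 5 statements merged into one kernel-verified Lean document; each statement's English description precedes it below -/
import Mathlib

section
/- Let E : W → Set (Set W) be an evidence function with derived plausibility relation ≼_E, and define B_E by w B_E v iff v ∈ ⋂𝒳 for some w-scenario 𝒳. If u B_E w and w ≼_E v, then u B_E v. -/
/-- Finite intersection property. -/
def FIP {W : Type*} (𝒳 : Set (Set W)) : Prop :=
  ∀ 𝒴 ⊆ 𝒳, 𝒴.Finite → (⋂₀ 𝒴).Nonempty

/-- A w-scenario: maximal fip subfamily of E(w). -/
def Scenario {W : Type*} (E : W → Set (Set W)) (w : W) (𝒳 : Set (Set W)) : Prop :=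
  𝒳 ⊆ E w ∧ FIP 𝒳 ∧ ∀ 𝒴, 𝒳 ⊆ 𝒴 → 𝒴 ⊆ E w → FIP 𝒴 → 𝒴 = 𝒳

/-- Specialization (derived plausibility) order. -/
def SpecLE {W : Type*} (E : W → Set (Set W)) (w v : W) : Prop :=
  ∀ u : W, ∀ X ∈ E u, w ∈ X → v ∈ X

/-- Derived belief relation. -/
def BE {W : Type*} (E : W → Set (Set W)) (w v : W) : Prop :=
  ∃ 𝒳, Scenario E w 𝒳 ∧ v ∈ ⋂₀ 𝒳

theorem SpecLE.mem_sInter_of_subset {W : Type*} {E : W → Set (Set W)} {u w v : W}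
    {𝒳 : Set (Set W)} (h : SpecLE E w v) (h𝒳 : 𝒳 ⊆ E u) (hw : w ∈ ⋂₀ 𝒳) : v ∈ ⋂₀ 𝒳 :=
  fun X hX => h u X (h𝒳 hX) (hw X hX)

theorem stmt_1 {W : Type*} (E : W → Set (Set W)) (u w v : W)
    (h1 : BE E u w) (h2 : SpecLE E w v) : BE E u v := by
  obtain ⟨𝒳, h𝒳, hw⟩ := h1
  exact ⟨𝒳, h𝒳, h2.mem_sInter_of_subset h𝒳.1 hw⟩
end

section
/- Let W = ℕ with uniform evidence set ℰ = {[N, ∞) : N ∈ ℕ} ∪ {W}. Then the unique scenario on this model is all of ℰ, and its intersection is empty; hence there is no point v belonging to the intersection of any scenario (i.e., [B]⊥ holds, witnessing that [E]⊤ → ⟨B⟩⊤ fails). -/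
def UScenario {W : Type*} (ℰ : Set (Set W)) (𝒳 : Set (Set W)) : Prop :=
  𝒳 ⊆ ℰ ∧ FIP 𝒳 ∧ ∀ 𝒴, 𝒳 ⊆ 𝒴 → 𝒴 ⊆ ℰ → FIP 𝒴 → 𝒴 = 𝒳

/-!
Every evidence set is a tail of `ℕ`, hence belongs to the filter `atTop`; since `atTop` is a
proper filter, `ℰ` itself has the finite intersection property, so it is the only maximal such
subfamily. But no `n` lies in the tail `[n + 1, ∞)`, so `⋂₀ ℰ = ∅`.
-/

section Scenario

variable {W : Type*} {ℰ 𝒳 : Set (Set W)}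

theorem FIP.of_subset_sets {f : Filter W} [f.NeBot] (h : 𝒳 ⊆ f.sets) : FIP 𝒳 :=
  fun _ h𝒴 hfin => Filter.nonempty_of_mem <|
    (Filter.sInter_mem hfin).2 fun _ hY => h (h𝒴 hY)

theorem uScenario_self_of_fip (h : FIP ℰ) : UScenario ℰ ℰ :=
  ⟨subset_rfl, h, fun _ h𝒴 h𝒴ℰ _ => h𝒴ℰ.antisymm h𝒴⟩

theorem UScenario.eq_of_fip (h : FIP ℰ) (h𝒳 : UScenario ℰ 𝒳) : 𝒳 = ℰ :=
  (h𝒳.2.2 ℰ h𝒳.1 subset_rfl h).symm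

end Scenario

def tailEvidence : Set (Set ℕ) := {X | ∃ N : ℕ, X = Set.Ici N} ∪ {Set.univ}

theorem tailEvidence_subset_atTop : tailEvidence ⊆ (Filter.atTop : Filter ℕ).sets := by
  rintro _ (⟨N, rfl⟩ | rfl)
  · exact Filter.Ici_mem_atTop N
  · exact Filter.univ_mem

theorem fip_tailEvidence : FIP tailEvidence :=
  FIP.of_subset_sets tailEvidence_subset_atTop

theorem sInter_tailEvidence : ⋂₀ tailEvidence = ∅ :=
  Set.sInter_eq_empty_iff.2 fun n =>
    ⟨Set.Ici (n + 1), Or.inl ⟨n + 1, rfl⟩, by simp⟩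

theorem stmt_4 :
    let ℰ : Set (Set ℕ) := {X | ∃ N : ℕ, X = Set.Ici N} ∪ {Set.univ}
    UScenario ℰ ℰ ∧ (∀ 𝒳, UScenario ℰ 𝒳 → 𝒳 = ℰ ∧ ⋂₀ 𝒳 = ∅) ∧
      ∀ v : ℕ, ¬ ∃ 𝒳, UScenario ℰ 𝒳 ∧ v ∈ ⋂₀ 𝒳 := by
  intro ℰ
  have unique : ∀ 𝒳, UScenario ℰ 𝒳 → 𝒳 = ℰ ∧ ⋂₀ 𝒳 = ∅ := fun 𝒳 h𝒳 => by
    obtain rfl := h𝒳.eq_of_fip fip_tailEvidence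
    exact ⟨rfl, sInter_tailEvidence⟩
  refine ⟨uScenario_self_of_fip fip_tailEvidence, unique, ?_⟩
  rintro v ⟨𝒳, h𝒳, hv⟩
  exact Set.eq_empty_iff_forall_notMem.1 (unique 𝒳 h𝒳).2 v hv
end

section
/- Let ℳ = ⟨W, ℰ, V⟩ be a uniform evidence model with derived plausibility order ≼_ℰ. If w ∈ ⋂𝒳 for some scenario 𝒳, then 𝒳 = ℰ[w] (the family of all evidence sets containing w), w is ≼_ℰ-maximal, and ⋂𝒳 = {v : w ≼_ℰ v and v ≼_ℰ w}. -/
def USpecLE {W : Type*} (ℰ : Set (Set W)) (w v : W) : Prop :=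
  ∀ X ∈ ℰ, w ∈ X → v ∈ X

/-!
A scenario `𝒳` with `w ∈ ⋂₀ 𝒳` lies inside `ℰ[w]`, which has the finite intersection property
with witness `w`; maximality of `𝒳` forces `𝒳 = ℰ[w]`. Hence `⋂₀ 𝒳` consists of the `v` with
`w ≼ v`, and for any such `v` the same argument gives `𝒳 = ℰ[v]`, so `ℰ[v] = ℰ[w]` and `v ≼ w`.
-/

theorem FIP.of_mem_sInter {W : Type*} {𝒴 : Set (Set W)} {w : W} (hw : w ∈ ⋂₀ 𝒴) : FIP 𝒴 :=
  fun _ h𝒵 _ => ⟨w, Set.sInter_subset_sInter h𝒵 hw⟩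

theorem uSpecLE_iff_mem_sInter {W : Type*} {ℰ : Set (Set W)} {w v : W} :
    USpecLE ℰ w v ↔ v ∈ ⋂₀ {X ∈ ℰ | w ∈ X} :=
  ⟨fun h X hX => h X hX.1 hX.2, fun h X hX hwX => h X ⟨hX, hwX⟩⟩

namespace UScenario

variable {W : Type*} {ℰ 𝒳 : Set (Set W)} {w v : W}

theorem eq_setOf_mem (hsc : UScenario ℰ 𝒳) (hw : w ∈ ⋂₀ 𝒳) : 𝒳 = {X ∈ ℰ | w ∈ X} :=
  (hsc.2.2 {X ∈ ℰ | w ∈ X} (fun X hX => ⟨hsc.1 hX, hw X hX⟩) (fun _ hX => hX.1)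
    (FIP.of_mem_sInter fun _ hX => hX.2)).symm

theorem mem_sInter_iff (hsc : UScenario ℰ 𝒳) (hw : w ∈ ⋂₀ 𝒳) :
    v ∈ ⋂₀ 𝒳 ↔ USpecLE ℰ w v := by
  rw [hsc.eq_setOf_mem hw, uSpecLE_iff_mem_sInter]

theorem uSpecLE_symm (hsc : UScenario ℰ 𝒳) (hw : w ∈ ⋂₀ 𝒳) (hwv : USpecLE ℰ w v) :
    USpecLE ℰ v w :=
  (hsc.mem_sInter_iff ((hsc.mem_sInter_iff hw).2 hwv)).1 hw

end UScenario

theorem stmt_5_general {W : Type*} (ℰ : Set (Set W))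
    (w : W) (𝒳 : Set (Set W)) (hsc : UScenario ℰ 𝒳) (hw : w ∈ ⋂₀ 𝒳) :
    𝒳 = {X ∈ ℰ | w ∈ X} ∧
    (∀ v, USpecLE ℰ w v → USpecLE ℰ v w) ∧
    ⋂₀ 𝒳 = {v | USpecLE ℰ w v ∧ USpecLE ℰ v w} := by
  refine ⟨hsc.eq_setOf_mem hw, fun _ => hsc.uSpecLE_symm hw, ?_⟩
  ext v
  rw [hsc.mem_sInter_iff hw, Set.mem_ofPred_eq]
  exact ⟨fun hwv => ⟨hwv, hsc.uSpecLE_symm hw hwv⟩, And.left⟩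

theorem stmt_5 {W : Type*} (ℰ : Set (Set W))
    (hne : ∅ ∉ ℰ) (huniv : Set.univ ∈ ℰ)
    (w : W) (𝒳 : Set (Set W)) (hsc : UScenario ℰ 𝒳) (hw : w ∈ ⋂₀ 𝒳) :
    𝒳 = {X ∈ ℰ | w ∈ X} ∧
    (∀ v, USpecLE ℰ w v → USpecLE ℰ v w) ∧
    ⋂₀ 𝒳 = {v | USpecLE ℰ w v ∧ USpecLE ℰ v w} :=
  stmt_5_general ℰ w 𝒳 hsc hw
end

section
/- Let ℳ = ⟨W, ℰ, V⟩ be a flat uniform evidence model with derived plausibility order ≼_ℰ. If w is ≼_ℰ-maximal, then ℰ[w] is a scenario, and w lies in the intersection of some scenario (i.e., w ∈ B_ℰ). Hence in flat uniform models, B_ℰ is exactly the set of ≼_ℰ-maximal points. -/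
/-! A point `w` in the intersection of a scenario `𝒳` is `≼`-maximal: if `w ≼ v` then `v` lies in
every member of `𝒳`, so any evidence set containing `v` can be added to `𝒳` without losing the
finite intersection property, hence already belongs to `𝒳` and contains `w`.

Conversely, if `w` is maximal, extend `ℰ[w]` to a scenario `𝒮` (Teichmüller–Tukey). By flatness
some `v` lies in `⋂₀ 𝒮 ⊆ ⋂₀ ℰ[w]`, i.e. `w ≼ v`; maximality gives `v ≼ w`, so every member of `𝒮`
contains `w` and `𝒮 = ℰ[w]`. -/

section

variable {W : Type*} {ℰ 𝒳 : Set (Set W)}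

theorem FIP.mono {𝒴 : Set (Set W)} (h : 𝒴 ⊆ 𝒳) (h𝒳 : FIP 𝒳) : FIP 𝒴 :=
  fun 𝒵 h𝒵 hfin => h𝒳 𝒵 (h𝒵.trans h) hfin

theorem FIP.of_sInter_nonempty (h : (⋂₀ 𝒳).Nonempty) : FIP 𝒳 :=
  fun _ h𝒴 _ => h.mono (Set.sInter_subset_sInter h𝒴)

theorem isOfFiniteCharacter_subset_fip (ℰ : Set (Set W)) :
    Order.IsOfFiniteCharacter {𝒴 : Set (Set W) | 𝒴 ⊆ ℰ ∧ FIP 𝒴} := by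
  refine fun 𝒳 => ⟨fun ⟨hℰ, hfip⟩ 𝒴 h𝒴 _ => ⟨h𝒴.trans hℰ, hfip.mono h𝒴⟩, fun h => ⟨?_, ?_⟩⟩
  · exact fun X hX => (h {X} (Set.singleton_subset_iff.2 hX) (Set.finite_singleton X)).1 rfl
  · exact fun 𝒴 h𝒴 hfin => (h 𝒴 h𝒴 hfin).2 𝒴 subset_rfl hfin

theorem exists_uScenario_superset (hℰ : 𝒳 ⊆ ℰ) (hfip : FIP 𝒳) :
    ∃ 𝒮, UScenario ℰ 𝒮 ∧ 𝒳 ⊆ 𝒮 := by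
  obtain ⟨𝒮, h𝒳𝒮, h𝒮⟩ := (isOfFiniteCharacter_subset_fip ℰ).exists_maximal ⟨hℰ, hfip⟩
  exact ⟨𝒮, ⟨h𝒮.prop.1, h𝒮.prop.2,
    fun 𝒴 h𝒮𝒴 hℰ𝒴 hfip𝒴 => (h𝒮.le_of_ge ⟨hℰ𝒴, hfip𝒴⟩ h𝒮𝒴).antisymm h𝒮𝒴⟩, h𝒳𝒮⟩

theorem UScenario.mem_of_mem_sInter {X : Set W} {v : W} (h𝒳 : UScenario ℰ 𝒳) (hX : X ∈ ℰ)
    (hvX : v ∈ X) (hv : v ∈ ⋂₀ 𝒳) : X ∈ 𝒳 := by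
  have hfip : FIP (insert X 𝒳) :=
    FIP.of_sInter_nonempty ⟨v, Set.mem_sInter.2 (Set.forall_mem_insert.2 ⟨hvX, hv⟩)⟩
  rw [← h𝒳.2.2 _ (Set.subset_insert X 𝒳) (Set.insert_subset hX h𝒳.1) hfip]
  exact Set.mem_insert X 𝒳

theorem UScenario.uSpecLE_of_mem_sInter {w v : W} (h𝒳 : UScenario ℰ 𝒳) (hw : w ∈ ⋂₀ 𝒳)
    (hwv : USpecLE ℰ w v) : USpecLE ℰ v w := by
  have hv : v ∈ ⋂₀ 𝒳 := fun Y hY => hwv Y (h𝒳.1 hY) (hw Y hY)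
  exact fun X hX hvX => hw X (h𝒳.mem_of_mem_sInter hX hvX hv)

theorem uScenario_setOf_mem_of_maximal (hflat : ∀ 𝒳, UScenario ℰ 𝒳 → (⋂₀ 𝒳).Nonempty) {w : W}
    (hw : ∀ v, USpecLE ℰ w v → USpecLE ℰ v w) : UScenario ℰ {X ∈ ℰ | w ∈ X} := by
  obtain ⟨𝒮, h𝒮, hsub⟩ := exists_uScenario_superset (fun X hX => hX.1)
    (FIP.of_sInter_nonempty ⟨w, fun X hX => hX.2⟩ : FIP {X ∈ ℰ | w ∈ X})
  obtain ⟨v, hv⟩ := hflat 𝒮 h𝒮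
  have hvw : USpecLE ℰ v w := hw v fun X hX hwX => hv X (hsub ⟨hX, hwX⟩)
  have h𝒮eq : 𝒮 = {X ∈ ℰ | w ∈ X} :=
    hsub.antisymm' fun X hX => ⟨h𝒮.1 hX, hvw X (h𝒮.1 hX) (hv X hX)⟩
  exact h𝒮eq ▸ h𝒮

end

theorem stmt_6_general {W : Type*} (ℰ : Set (Set W))
    (hflat : ∀ 𝒳, UScenario ℰ 𝒳 → (⋂₀ 𝒳).Nonempty) :
    (∀ w, (∀ v, USpecLE ℰ w v → USpecLE ℰ v w) →
      UScenario ℰ {X ∈ ℰ | w ∈ X} ∧ ∃ 𝒳, UScenario ℰ 𝒳 ∧ w ∈ ⋂₀ 𝒳) ∧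
    {w | ∃ 𝒳, UScenario ℰ 𝒳 ∧ w ∈ ⋂₀ 𝒳} =
      {w | ∀ v, USpecLE ℰ w v → USpecLE ℰ v w} := by
  have hmax : ∀ w, (∀ v, USpecLE ℰ w v → USpecLE ℰ v w) →
      UScenario ℰ {X ∈ ℰ | w ∈ X} ∧ ∃ 𝒳, UScenario ℰ 𝒳 ∧ w ∈ ⋂₀ 𝒳 := fun w hw =>
    have h := uScenario_setOf_mem_of_maximal hflat hw
    ⟨h, _, h, fun _ hX => hX.2⟩
  exact ⟨hmax, Set.Subset.antisymm (fun _ ⟨_, h𝒳, hw⟩ _ => h𝒳.uSpecLE_of_mem_sInter hw)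
    fun w hw => (hmax w hw).2⟩

theorem stmt_6 {W : Type*} (ℰ : Set (Set W))
    (hne : ∅ ∉ ℰ) (huniv : Set.univ ∈ ℰ)
    (hflat : ∀ 𝒳, UScenario ℰ 𝒳 → (⋂₀ 𝒳).Nonempty) :
    (∀ w, (∀ v, USpecLE ℰ w v → USpecLE ℰ v w) →
      UScenario ℰ {X ∈ ℰ | w ∈ X} ∧ ∃ 𝒳, UScenario ℰ 𝒳 ∧ w ∈ ⋂₀ 𝒳) ∧
    {w | ∃ 𝒳, UScenario ℰ 𝒳 ∧ w ∈ ⋂₀ 𝒳} =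
      {w | ∀ v, USpecLE ℰ w v → USpecLE ℰ v w} :=
  stmt_6_general ℰ hflat
end

section
/- In the model W = ℕ with uniform evidence ℰ = {[N,∞) : N ∈ ℕ} ∪ {ℕ}, the derived belief relation B_ℰ is empty, while in the one-point model with a single evidence set over {w}, the point w satisfies w B w. Hence the derived belief modality [B] is not invariant under the evidence p-morphism conditions satisfied by the constant map ℕ → {w}; i.e., [B] is not definable from [A], [E], [≼] over uniform intended evidence models. -/
/-!
Every evidence set of the source contains a tail `[N, ∞)`, so the whole family lies in the
filter `atTop` and has the finite intersection property. Hence its unique scenario is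
the whole family, whose intersection is empty, and `B` has no successors. On the one-point
target the unique scenario is `{univ}`, which contains `w`.
-/

namespace FIP

variable {W : Type*} {ℰ : Set (Set W)}

theorem of_subset_filter {l : Filter W} [l.NeBot] (h : ℰ ⊆ l.sets) : FIP ℰ :=
  fun _ h𝒴 hfin => Filter.nonempty_of_mem ((Filter.sInter_mem hfin).2 fun _ hX => h (h𝒴 hX))

theorem uScenario_self (hℰ : FIP ℰ) : UScenario ℰ ℰ :=
  ⟨subset_rfl, hℰ, fun _ h𝒳𝒴 h𝒴ℰ _ => h𝒴ℰ.antisymm h𝒳𝒴⟩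

theorem eq_of_uScenario {𝒳 : Set (Set W)} (hℰ : FIP ℰ) (h𝒳 : UScenario ℰ 𝒳) : 𝒳 = ℰ :=
  (h𝒳.2.2 ℰ h𝒳.1 subset_rfl hℰ).symm

end FIP

theorem fip_tails_nat : FIP ({X | ∃ N : ℕ, X = Set.Ici N} ∪ {Set.univ} : Set (Set ℕ)) := by
  refine FIP.of_subset_filter (l := Filter.atTop) ?_
  rintro X (⟨N, rfl⟩ | rfl)
  · exact Filter.Ici_mem_atTop N
  · exact Filter.univ_mem

theorem fip_singleton_univ {W : Type*} [Nonempty W] : FIP ({Set.univ} : Set (Set W)) :=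
  FIP.of_subset_filter (l := ⊤) fun _ hX => by rw [Set.mem_singleton_iff.1 hX]; exact Filter.univ_mem

theorem stmt_18 :
    let ℰ₁ : Set (Set ℕ) := {X | ∃ N : ℕ, X = Set.Ici N} ∪ {Set.univ}
    let ℰ₂ : Set (Set Unit) := {Set.univ}
    let π : ℕ → Unit := fun _ => ()
    -- B_ℰ is empty on the source...
    (∀ v : ℕ, ¬ ∃ 𝒳, UScenario ℰ₁ 𝒳 ∧ v ∈ ⋂₀ 𝒳) ∧
    -- ...but the single point of the target is derived-belief accessible
    (∃ 𝒳, UScenario ℰ₂ 𝒳 ∧ () ∈ ⋂₀ 𝒳) ∧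
    -- the constant map satisfies the evidence forth/back conditions
    (∀ X ∈ ℰ₁, ∃ Y ∈ ℰ₂, Y ⊆ π '' X) ∧
    (∀ Y ∈ ℰ₂, ∃ X ∈ ℰ₁, π '' X ⊆ Y) ∧
    -- and the plausibility forth/back conditions for the derived orders
    (∀ w v : ℕ, USpecLE ℰ₁ w v → USpecLE ℰ₂ (π w) (π v)) ∧
    (∀ (w : ℕ) (u : Unit), USpecLE ℰ₂ (π w) u → ∃ v : ℕ, π v = u ∧ USpecLE ℰ₁ w v) := by
  intro ℰ₁ ℰ₂ π
  refine ⟨?_, ⟨ℰ₂, fip_singleton_univ.uScenario_self, by simp [ℰ₂]⟩, ?_, ?_, ?_, ?_⟩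
  · rintro v ⟨𝒳, h𝒳, hv⟩
    rw [fip_tails_nat.eq_of_uScenario h𝒳] at hv
    exact (Nat.lt_irrefl v) (hv (Set.Ici (v + 1)) (Or.inl ⟨v + 1, rfl⟩))
  · rintro X (⟨N, rfl⟩ | rfl)
    · exact ⟨Set.univ, rfl, fun _ _ => ⟨N, Set.self_mem_Ici, rfl⟩⟩
    · exact ⟨Set.univ, rfl, fun _ _ => ⟨0, trivial, rfl⟩⟩
  · rintro Y rfl
    exact ⟨Set.univ, Or.inr rfl, Set.subset_univ _⟩
  · rintro w v - X rfl -
    trivial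
  · exact fun w u _ => ⟨w, rfl, fun _ _ h => h⟩
end
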